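/- Let G be a digraph, k ≥ 1 a natural number, and s, t vertices with d := dist_G(s,t) < ∞. Suppose that no simple s-to-t path in G has length ℓ with d + k ≤ ℓ ≤ d + 3k − 1. Let P be a simple s-to-t path of length at least d + k, of minimum length among all such paths. Let p be the smallest natural number such that at least two distinct vertices of P lie in the layer L_p = {v : dist_G(s,v) = p}, and let x and y be the first and second vertices of P in L_p. Then the subpath P[x→y] has length at least 2k. -/

import Mathlib

variable {V : Type*}

/-- `w` is a directed walk from `u` to `v` in the digraph with arc relation `A`:
a nonempty list of vertices whose consecutive members are joined by arcs,
starting at `u` and ending at `v`. -/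
def IsDiWalk (A : V → V → Prop) (u v : V) (w : List V) : Prop :=
  w.Chain' A ∧ w.head? = some u ∧ w.getLast? = some v

/-- The length (number of arcs) of a walk represented as its list of vertices. -/
def walkLength (w : List V) : ℕ :=
  w.length - 1

/-- `w` is a simple directed path from `u` to `v`. -/
def IsDiPath (A : V → V → Prop) (u v : V) (w : List V) : Prop :=
  IsDiWalk A u v w ∧ w.Nodup

/-- Directed distance from `u` to `v`: the minimum length of a directed
`u`-to-`v` walk, or `⊤` if `v` is unreachable from `u`. -/
noncomputable def ddist (A : V → V → Prop) (u v : V) : ℕ∞ :=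
  ⨅ (w : List V) (_ : IsDiWalk A u v w), (walkLength w : ℕ∞)

/-- The internal (non-endpoint) vertices of a path represented as a list. -/
def internalVerts (w : List V) : List V :=
  w.tail.dropLast

/-- Two paths are internally vertex-disjoint if no internal vertex of either
lies on the other. -/
def InternallyDisjoint (w₁ w₂ : List V) : Prop :=
  (∀ a ∈ internalVerts w₁, a ∉ w₂) ∧ (∀ a ∈ internalVerts w₂, a ∉ w₁)

/-- All vertices of `w` lie in the induced subgraph `G_{≥p}` (with respect to
source `s`), i.e. have distance at least `p` from `s`. A path satisfying
`IsDiPath A x y w` together with `InGeq A s p w` is exactly a path of the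
induced subgraph of `G` on `{v : dist_G(s,v) ≥ p}`. -/
def InGeq (A : V → V → Prop) (s : V) (p : ℕ) (w : List V) : Prop :=
  ∀ a ∈ w, (p : ℕ∞) ≤ ddist A s a

/-!
Suppose `P[x→y]` had fewer than `2k` arcs. Minimality of `P` together with the gap
hypothesis forces `|P| ≥ d + 3k`. Before `x`, the path stays strictly below layer `p`
(a walk from `s` climbs at most one layer per arc) and meets each such layer at most once,
so `x` sits at position exactly `p` on `P`. Now replace `P[s→y]` by a shortest `s`-`y` walk
`R`: its `q`-th vertex lies in `L_q`, so `R` is a path, and for `q < p` that vertex is the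
unique vertex of `P` in `L_q`, which comes before `y`; hence `R` avoids `P` after `y`. The
resulting `s`-`t` path has length `|P| - |P[x→y]|`, which is still at least `d + k` but
less than `|P|`, contradicting the choice of `P`.
-/

section Walks

variable {A : V → V → Prop} {s u v z a b : V} {w w' : List V}

theorem isDiWalk_iff :
    IsDiWalk A u v w ↔ w.IsChain A ∧ w.head? = some u ∧ w.getLast? = some v :=
  Iff.rfl

theorem isDiWalk_singleton : IsDiWalk A u v [a] ↔ a = u ∧ a = v := by
  simp [isDiWalk_iff, eq_comm]

theorem isDiWalk_cons_cons {l : List V} :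
    IsDiWalk A u v (a :: b :: l) ↔ a = u ∧ A a b ∧ IsDiWalk A b v (b :: l) := by
  simp only [isDiWalk_iff, List.isChain_cons_cons, List.head?_cons, Option.some.injEq]
  tauto

theorem IsDiWalk.ne_nil (h : IsDiWalk A u v w) : w ≠ [] := by
  rintro rfl
  simp [isDiWalk_iff] at h

theorem IsDiWalk.eq_cons (h : IsDiWalk A u v w) : w = u :: w.tail :=
  List.eq_cons_of_mem_head? h.2.1

theorem IsDiWalk.walkLength_lt (h : IsDiWalk A u v w) : walkLength w < w.length :=
  Nat.sub_one_lt (List.length_pos_iff.mpr h.ne_nil).ne'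

theorem IsDiWalk.getElem_walkLength (h : IsDiWalk A u v w) :
    w[walkLength w]'h.walkLength_lt = v := by
  have hlt : w.length - 1 < w.length := h.walkLength_lt
  have hlast := h.2.2
  rw [List.getLast?_eq_getElem?, List.getElem?_eq_getElem hlt] at hlast
  exact Option.some_injective _ hlast

theorem IsDiWalk.take (h : IsDiWalk A u v w) {n : ℕ} (hn : n < w.length) :
    IsDiWalk A u w[n] (w.take (n + 1)) :=
  ⟨List.IsChain.take h.1 _, by simp [List.head?_take, h.2.1],
    by simp [List.getLast?_take, hn]⟩

theorem IsDiWalk.drop (h : IsDiWalk A u v w) {n : ℕ} (hn : n < w.length) :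
    IsDiWalk A w[n] v (w.drop n) :=
  ⟨List.IsChain.drop h.1 _, by simp [List.head?_drop, hn],
    by simp [List.getLast?_drop, hn.not_ge, h.2.2]⟩

theorem IsDiWalk.append (h : IsDiWalk A u v w) (h' : IsDiWalk A v z (v :: w')) :
    IsDiWalk A u z (w ++ w') := by
  induction w generalizing u with
  | nil => exact absurd rfl h.ne_nil
  | cons a l ih =>
    cases l with
    | nil =>
      obtain ⟨rfl, rfl⟩ := isDiWalk_singleton.mp h
      exact h'
    | cons b l =>
      obtain ⟨rfl, hab, hl⟩ := isDiWalk_cons_cons.mp h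
      exact isDiWalk_cons_cons.mpr ⟨rfl, hab, ih hl⟩

theorem walkLength_append (hw : w ≠ []) (v : V) :
    walkLength (w ++ w') = walkLength w + walkLength (v :: w') := by
  have := List.length_pos_iff.mpr hw
  simp only [walkLength, List.length_append, List.length_cons]
  omega

theorem walkLength_take {n : ℕ} (hn : n < w.length) : walkLength (w.take (n + 1)) = n := by
  simp only [walkLength, List.length_take]
  omega

theorem ddist_le_walkLength (h : IsDiWalk A u v w) : ddist A u v ≤ walkLength w :=
  iInf₂_le w h

theorem exists_isDiWalk_walkLength_eq_ddist (h : ddist A u v ≠ ⊤) :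
    ∃ w, IsDiWalk A u v w ∧ (walkLength w : ℕ∞) = ddist A u v := by
  rw [ddist, iInf_subtype'] at h ⊢
  have : Nonempty { w // IsDiWalk A u v w } := by
    by_contra hempty
    rw [not_nonempty_iff] at hempty
    exact h (iInf_of_empty _)
  obtain ⟨⟨w, hw⟩, hmin⟩ := ENat.exists_eq_iInf fun w : { w // IsDiWalk A u v w } ↦
    (walkLength w.1 : ℕ∞)
  exact ⟨w, hw, hmin⟩

theorem ddist_triangle : ddist A u z ≤ ddist A u v + ddist A v z := by
  rcases eq_or_ne (ddist A u v) ⊤ with huv | huv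
  · simp [huv]
  rcases eq_or_ne (ddist A v z) ⊤ with hvz | hvz
  · simp [hvz]
  obtain ⟨w, hw, hwlen⟩ := exists_isDiWalk_walkLength_eq_ddist huv
  obtain ⟨w', hw', hw'len⟩ := exists_isDiWalk_walkLength_eq_ddist hvz
  obtain ⟨l, rfl⟩ : ∃ l, w' = v :: l := ⟨_, hw'.eq_cons⟩
  calc ddist A u z ≤ walkLength (w ++ l) := ddist_le_walkLength (hw.append hw')
    _ = ddist A u v + ddist A v z := by
      rw [walkLength_append hw.ne_nil v, ← hwlen, ← hw'len, Nat.cast_add]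

theorem ddist_le_add_one_of_adj (h : A a b) : ddist A s b ≤ ddist A s a + 1 := by
  have hab : ddist A a b ≤ 1 :=
    ddist_le_walkLength (w := [a, b]) ⟨List.isChain_pair.mpr h, rfl, rfl⟩
  calc ddist A s b ≤ ddist A s a + ddist A a b := ddist_triangle
    _ ≤ ddist A s a + 1 := by gcongr

theorem IsDiWalk.ddist_getElem_le (h : IsDiWalk A u v w) {n : ℕ} (hn : n < w.length) :
    ddist A u w[n] ≤ n := by
  simpa only [walkLength_take hn] using ddist_le_walkLength (h.take hn)

theorem IsDiWalk.exists_ddist_eq (h : IsDiWalk A u v w) {q : ℕ} (hu : ddist A s u ≤ q)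
    (hv : q ≤ ddist A s v) : ∃ c ∈ w, ddist A s c = q := by
  induction w generalizing u with
  | nil => exact absurd rfl h.ne_nil
  | cons a l ih =>
    obtain rfl : a = u := Option.some_injective _ h.2.1
    rcases hu.eq_or_lt with hq | hq
    · exact ⟨a, List.mem_cons_self, hq⟩
    cases l with
    | nil =>
      obtain ⟨-, rfl⟩ := isDiWalk_singleton.mp h
      exact absurd hv hq.not_ge
    | cons b l =>
      obtain ⟨-, hab, hl⟩ := isDiWalk_cons_cons.mp h
      obtain ⟨c, hc, hcq⟩ :=
        ih hl ((ddist_le_add_one_of_adj hab).trans (Order.add_one_le_of_lt hq))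
      exact ⟨c, List.mem_cons_of_mem _ hc, hcq⟩

theorem ddist_self : ddist A u u = 0 :=
  nonpos_iff_eq_zero.mp (ddist_le_walkLength (w := [u]) ⟨List.isChain_singleton u, rfl, rfl⟩)

theorem IsDiWalk.ddist_getElem_eq (h : IsDiWalk A u v w)
    (hgeo : (walkLength w : ℕ∞) = ddist A u v) {n : ℕ} (hn : n < w.length) :
    ddist A u w[n] = n := by
  have hle := h.ddist_getElem_le hn
  have hsuffix : ddist A w[n] v ≤ (walkLength w - n : ℕ) := by
    simpa [walkLength, Nat.sub_right_comm] using ddist_le_walkLength (h.drop hn)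
  have htri : (walkLength w : ℕ∞) ≤ ddist A u w[n] + (walkLength w - n : ℕ) :=
    hgeo ▸ ddist_triangle.trans (add_le_add_right hsuffix _)
  lift ddist A u w[n] to ℕ using ne_top_of_le_ne_top (ENat.natCast_ne_top n) hle with m
  have : n ≤ walkLength w := by unfold walkLength; omega
  norm_cast at hle htri ⊢
  omega

theorem IsDiWalk.nodup_of_geodesic (h : IsDiWalk A u v w)
    (hgeo : (walkLength w : ℕ∞) = ddist A u v) : w.Nodup := by
  refine List.nodup_iff_injective_getElem.mpr fun i j hij => Fin.ext ?_
  have := (h.ddist_getElem_eq hgeo i.2).symm.trans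
    ((congrArg (ddist A u) hij).trans (h.ddist_getElem_eq hgeo j.2))
  exact_mod_cast this

theorem IsDiWalk.ddist_lt_of_mem_take (h : IsDiWalk A s v w) {i p : ℕ}
    (hfirst : ∀ z ∈ w.take i, ddist A s z ≠ p) {a : V} (ha : a ∈ w.take i) :
    ddist A s a < p := by
  obtain ⟨n, hn, rfl⟩ := List.getElem_of_mem ha
  rw [List.length_take] at hn
  rw [List.getElem_take]
  refine lt_of_not_ge fun hpa => ?_
  obtain ⟨c, hc, hcp⟩ := (h.take (lt_of_lt_of_le hn (min_le_right _ _))).exists_ddist_eq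
    (by rw [ddist_self]; exact zero_le) hpa
  exact hfirst c ((List.take_sublist_take_left (by omega)).subset hc) hcp

theorem length_le_of_ddist_lt {l : List V} (hl : l.Nodup) {p : ℕ}
    (hlt : ∀ a ∈ l, ddist A s a < p)
    (hinj : Set.InjOn (ddist A s) {a | a ∈ l}) : l.length ≤ p := by
  have hsub : l.map (ddist A s) ⊆ (List.range p).map Nat.cast := by
    intro e he
    obtain ⟨a, ha, rfl⟩ := List.mem_map.mp he
    have hap := hlt a ha
    lift ddist A s a to ℕ using ne_top_of_lt hap with n
    exact List.mem_map.mpr ⟨n, List.mem_range.mpr (by exact_mod_cast hap), rfl⟩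
  simpa using (hl.map_on fun _ ha _ hb => hinj ha hb).length_le_of_subset hsub

end Walks

section Shortcut

variable {A : V → V → Prop} {s t : V} {P R : List V} {j : ℕ}

theorem IsDiPath.idxOf_eq_of_first [DecidableEq V] (hP : IsDiPath A s t P) {x : V} (hx : x ∈ P)
    {p : ℕ} (hxp : ddist A s x = p) (hxfirst : ∀ z ∈ P.take (P.idxOf x), ddist A s z ≠ p)
    (huniq : Set.InjOn (ddist A s) {a | a ∈ P ∧ ddist A s a < p}) : P.idxOf x = p := by
  have hi : P.idxOf x < P.length := List.idxOf_lt_length_iff.mpr hx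
  have hlt := fun a (ha : a ∈ P.take (P.idxOf x)) => hP.1.ddist_lt_of_mem_take hxfirst ha
  refine le_antisymm ?_ ?_
  · simpa [hi.le] using length_le_of_ddist_lt (hP.2.sublist (List.take_sublist _ _)) hlt
      fun a ha b hb hab => huniq ⟨List.mem_of_mem_take ha, hlt a ha⟩
        ⟨List.mem_of_mem_take hb, hab ▸ hlt a ha⟩ hab
  · have := hP.1.ddist_getElem_le hi
    rwa [List.getElem_idxOf hi, hxp, Nat.cast_le] at this

theorem IsDiPath.mem_take_of_mem_geodesic (hP : IsDiPath A s t P) (hj : j < P.length)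
    (hR : IsDiWalk A s P[j] R) (hgeo : (walkLength R : ℕ∞) = ddist A s P[j])
    (huniq : Set.InjOn (ddist A s) {a | a ∈ P ∧ ddist A s a < ddist A s P[j]})
    {c : V} (hcR : c ∈ R) (hcP : c ∈ P) : c ∈ P.take (j + 1) := by
  obtain ⟨r, hr, rfl⟩ := List.getElem_of_mem hcR
  have hdist := hR.ddist_getElem_eq hgeo hr
  have hrle : r ≤ walkLength R := by have := hR.walkLength_lt; unfold walkLength at *; omega
  rcases hrle.eq_or_lt with rfl | hlt
  · rw [hR.getElem_walkLength]
    exact List.mem_iff_getElem.mpr ⟨j, by simp [hj], List.getElem_take⟩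
  · obtain ⟨c, hc, hcr⟩ := (hP.1.take hj).exists_ddist_eq (q := r)
      (by rw [ddist_self]; exact zero_le) (by rw [← hgeo]; exact_mod_cast hlt.le)
    have hlayer : ddist A s R[r] < ddist A s P[j] := by rw [hdist, ← hgeo]; exact_mod_cast hlt
    rwa [huniq ⟨hcP, hlayer⟩ ⟨List.mem_of_mem_take hc, hcr ▸ hdist ▸ hlayer⟩
      (hdist.trans hcr.symm)]

theorem IsDiPath.geodesic_append_drop (hP : IsDiPath A s t P) (hj : j < P.length)
    (hR : IsDiWalk A s P[j] R) (hgeo : (walkLength R : ℕ∞) = ddist A s P[j])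
    (huniq : Set.InjOn (ddist A s) {a | a ∈ P ∧ ddist A s a < ddist A s P[j]}) :
    IsDiPath A s t (R ++ P.drop (j + 1)) ∧
      walkLength (R ++ P.drop (j + 1)) = walkLength R + (walkLength P - j) := by
  have hsuffix : IsDiWalk A P[j] t (P[j] :: P.drop (j + 1)) :=
    List.drop_eq_getElem_cons hj ▸ hP.1.drop hj
  refine ⟨⟨hR.append hsuffix, List.nodup_append.mpr ⟨hR.nodup_of_geodesic hgeo,
    hP.2.sublist (List.drop_sublist _ _), ?_⟩⟩, ?_⟩
  · rintro c hcR _ hcD rfl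
    exact List.disjoint_take_drop hP.2 le_rfl
      (hP.mem_take_of_mem_geodesic hj hR hgeo huniq hcR (List.mem_of_mem_drop hcD)) hcD
  · rw [walkLength_append hR.ne_nil P[j]]
    simp only [walkLength, List.length_cons, List.length_drop]
    omega

end Shortcut

theorem stmt11_general [DecidableEq V] (A : V → V → Prop) (k : ℕ)
    (s t : V) (d : ℕ)
    (hgap : ∀ Q : List V, IsDiPath A s t Q →
      ¬ (d + k ≤ walkLength Q ∧ walkLength Q ≤ d + 3 * k - 1))
    (P : List V) (hP : IsDiPath A s t P) (hPlen : d + k ≤ walkLength P)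
    (hPmin : ∀ Q : List V, IsDiPath A s t Q → d + k ≤ walkLength Q →
      walkLength P ≤ walkLength Q)
    (p : ℕ)
    (hpmin : ∀ q : ℕ, q < p →
      ¬ ∃ u ∈ P, ∃ v ∈ P, u ≠ v ∧ ddist A s u = (q : ℕ∞) ∧ ddist A s v = (q : ℕ∞))
    (x : V) (hxp : ddist A s x = (p : ℕ∞))
    (hxfirst : ∀ z ∈ P.take (P.idxOf x), ddist A s z ≠ (p : ℕ∞))
    (y : V) (hyP : y ∈ P) (hyp : ddist A s y = (p : ℕ∞))
    (hxy : P.idxOf x < P.idxOf y) :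
    2 * k ≤ walkLength ((P.drop (P.idxOf x)).take (P.idxOf y - P.idxOf x + 1)) := by
  have huniq : Set.InjOn (ddist A s) {a | a ∈ P ∧ ddist A s a < p} := by
    rintro a ⟨ha, hap⟩ b ⟨hb, -⟩ hab
    lift ddist A s a to ℕ using ne_top_of_lt hap with q hq
    by_contra hne
    exact hpmin q (by exact_mod_cast hap) ⟨a, ha, b, hb, hne, hq.symm, hab.symm⟩
  have hj : P.idxOf y < P.length := List.idxOf_lt_length_iff.mpr hyP
  have hi : P.idxOf x = p :=
    hP.idxOf_eq_of_first (List.idxOf_lt_length_iff.mp (hxy.trans hj)) hxp hxfirst huniq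
  obtain ⟨R, hR, hgeo⟩ := exists_isDiWalk_walkLength_eq_ddist (hyp ▸ ENat.natCast_ne_top p)
  rw [← List.getElem_idxOf hj] at hR hgeo hyp
  obtain ⟨hQ, hQlen⟩ := hP.geodesic_append_drop hj hR hgeo (hyp ▸ huniq)
  have hRp : walkLength R = p := by exact_mod_cast hgeo.trans hyp
  have hlong : d + 3 * k ≤ walkLength P := by have := hgap P hP; omega
  have hjP : P.idxOf y ≤ walkLength P := Nat.le_sub_one_of_lt hj
  have hslice : walkLength ((P.drop (P.idxOf x)).take (P.idxOf y - P.idxOf x + 1)) =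
      P.idxOf y - P.idxOf x := by
    simp only [walkLength, List.length_take, List.length_drop]
    omega
  rw [hslice]
  by_contra hshort
  have := hPmin _ hQ (by omega)
  omega

/-- suppose no simple `s`-to-`t` path has length `ℓ` with
`d + k ≤ ℓ ≤ d + 3k − 1` (`d = dist_G(s,t) < ∞`, `k ≥ 1`), and `P` is a
shortest simple `s`-to-`t` path among those of length at least `d + k`. With
`p`, `x`, `y` as in the layer analysis, the subpath `P[x→y]` has length at
least `2k`. -/
theorem stmt11 [DecidableEq V] (A : V → V → Prop) (k : ℕ) (hk : 1 ≤ k)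
    (s t : V) (d : ℕ) (hd : ddist A s t = (d : ℕ∞))
    (hgap : ∀ Q : List V, IsDiPath A s t Q →
      ¬ (d + k ≤ walkLength Q ∧ walkLength Q ≤ d + 3 * k - 1))
    (P : List V) (hP : IsDiPath A s t P) (hPlen : d + k ≤ walkLength P)
    (hPmin : ∀ Q : List V, IsDiPath A s t Q → d + k ≤ walkLength Q →
      walkLength P ≤ walkLength Q)
    (p : ℕ)
    (hp : ∃ u ∈ P, ∃ v ∈ P, u ≠ v ∧ ddist A s u = (p : ℕ∞) ∧ ddist A s v = (p : ℕ∞))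
    (hpmin : ∀ q : ℕ, q < p →
      ¬ ∃ u ∈ P, ∃ v ∈ P, u ≠ v ∧ ddist A s u = (q : ℕ∞) ∧ ddist A s v = (q : ℕ∞))
    (x : V) (hxP : x ∈ P) (hxp : ddist A s x = (p : ℕ∞))
    (hxfirst : ∀ z ∈ P.take (P.idxOf x), ddist A s z ≠ (p : ℕ∞))
    (y : V) (hyP : y ∈ P) (hyp : ddist A s y = (p : ℕ∞))
    (hxy : P.idxOf x < P.idxOf y)
    (hysecond : ∀ z ∈ P.take (P.idxOf y), z ≠ x → ddist A s z ≠ (p : ℕ∞)) :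
    2 * k ≤ walkLength ((P.drop (P.idxOf x)).take (P.idxOf y - P.idxOf x + 1)) :=
  stmt11_general A k s t d hgap P hP hPlen hPmin p hpmin x hxp hxfirst y hyP hyp hxy
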